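/- arXiv:2603.10145 — 3 statements merged into one kernel-verified Lean document; each statement's English description precedes it below -/
import Mathlib

section
/- For D ≥ 2, given any target probability α ∈ [1/V, 1], any ε > 0, any index j ∈ Fin V, and V ≥ 2, there exist a vector h ∈ ℝ^D and a matrix W ∈ ℝ^{V×D} such that |σ(W h)_j - α| < ε, where σ is the softmax on ℝ^V. -/
theorem softmax_top1_reachable (D V : ℕ) (hD : 2 ≤ D) (hV : 2 ≤ V)
    (α : ℝ) (hα : 1 / (V : ℝ) ≤ α ∧ α ≤ 1) (ε : ℝ) (hε : 0 < ε) (j : Fin V) :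
    ∃ (h : Fin D → ℝ) (W : Matrix (Fin V) (Fin D) ℝ),
      |Real.exp (W.mulVec h j) / (∑ k, Real.exp (W.mulVec h k)) - α| < ε := by
  have hVr : (2:ℝ) ≤ (V:ℝ) := by exact_mod_cast hV
  have hVpos : (0:ℝ) < (V:ℝ) := by linarith
  -- target probability strictly inside (0,1)
  set β : ℝ := min α (max (1 - ε/2) (1/(V:ℝ))) with hβdef
  have hβpos : 0 < β := by
    apply lt_min
    · calc (0:ℝ) < 1/(V:ℝ) := by positivity
        _ ≤ α := hα.1
    · exact lt_max_of_lt_right (by positivity)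
  have hβlt1 : β < 1 := by
    apply min_lt_of_right_lt
    apply max_lt
    · linarith
    · calc 1/(V:ℝ) ≤ 1/2 := one_div_le_one_div_of_le (by norm_num) hVr
        _ < 1 := by norm_num
  have hβclose : |β - α| < ε := by
    rw [abs_sub_lt_iff]
    constructor
    · have : β ≤ α := min_le_left _ _
      linarith
    · have h1 : α ≤ 1 := hα.2
      have h2 : 1 - ε/2 ≤ max (1 - ε/2) (1/(V:ℝ)) := le_max_left _ _
      rcases min_choice α (max (1 - ε/2) (1/(V:ℝ))) with hc | hc
      · rw [← hβdef] at hc; rw [hc]; linarith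
      · rw [← hβdef] at hc; rw [hc]; linarith
  have hV1 : (0:ℝ) < (V:ℝ) - 1 := by linarith
  have h1β : (0:ℝ) < 1 - β := by linarith
  set s : ℝ := Real.log (((V:ℝ) - 1) * β / (1 - β)) with hsdef
  have hexp : Real.exp s = ((V:ℝ) - 1) * β / (1 - β) := by
    rw [hsdef, Real.exp_log (by positivity)]
  have hD0 : 0 < D := by omega
  set z : Fin D := ⟨0, hD0⟩ with hz
  set W : Matrix (Fin V) (Fin D) ℝ :=
    Matrix.of (fun k i => if k = j ∧ i = z then s else 0) with hW
  refine ⟨fun i => if i = z then 1 else 0, W, ?_⟩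
  have hmv : ∀ k, W.mulVec (fun i => if i = z then (1:ℝ) else 0) k
      = if k = j then s else 0 := by
    intro k
    by_cases hk : k = j <;>
      simp [hW, Matrix.mulVec, dotProduct, hk, mul_ite, Finset.sum_ite_eq']
  simp only [hmv]
  have hsum : (∑ k : Fin V, Real.exp (if k = j then s else 0))
      = Real.exp s + ((V:ℝ) - 1) := by
    rw [← Finset.add_sum_erase _ _ (Finset.mem_univ j)]
    simp only [if_pos rfl]
    congr 1
    have : ∀ k ∈ Finset.univ.erase j, Real.exp (if k = j then s else 0) = 1 := by
      intro k hk
      rw [if_neg (Finset.mem_erase.mp hk).1, Real.exp_zero]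
    rw [Finset.sum_congr rfl this, Finset.sum_const, Finset.card_erase_of_mem
      (Finset.mem_univ j)]
    simp [mul_comm]
    push_cast [Nat.cast_sub (by omega : 1 ≤ V)]
    ring
  rw [hsum]
  simp only [if_true]
  have hval : Real.exp s / (Real.exp s + ((V:ℝ) - 1)) = β := by
    rw [hexp]
    field_simp
    ring
  rw [hval]
  exact hβclose
end

section
/- Let P ∈ (0,1)^{C×V} be row-stochastic, and let Ñ ∈ ℝ^{C×V} be row-stochastic such that there is a set S of row indices and an injection t : S → columns with Ñ_{i, t(i)} = 1 and Ñ_{ij} = 0 for j ≠ t(i), for each i ∈ S. Then rank(P − Ñ) ≥ min(|S|, V − 1). -/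
theorem rank_pred_error_ge (C V : ℕ)
    (P Ntil : Matrix (Fin C) (Fin V) ℝ)
    (hP : ∀ i j, 0 < P i j ∧ P i j < 1) (hProw : ∀ i, ∑ j, P i j = 1)
    (hN : ∀ i j, 0 ≤ Ntil i j) (hNrow : ∀ i, ∑ j, Ntil i j = 1)
    (S : Finset (Fin C)) (t : Fin C → Fin V) (ht : Set.InjOn t S)
    (hone : ∀ i ∈ S, Ntil i (t i) = 1)
    (hzero : ∀ i ∈ S, ∀ j, j ≠ t i → Ntil i j = 0) :
    min S.card (V - 1) ≤ (P - Ntil).rank := by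
  classical
  set k := min S.card (V - 1) with hk
  rcases Nat.eq_zero_or_pos k with hk0 | hkpos
  · simp [hk0]
  -- choose a subset of S of size k
  obtain ⟨S', hS'sub, hS'card⟩ :=
    Finset.exists_subset_card_eq (show k ≤ S.card from min_le_left _ _)
  -- enumerate S'
  let r : Fin k → Fin C := fun a => ((S'.orderIsoOfFin hS'card) a : Fin C)
  have hrS : ∀ a, r a ∈ S := fun a => hS'sub ((S'.orderIsoOfFin hS'card) a).2
  have hrinj : Function.Injective r := fun a b hab => by
    have := Subtype.ext hab
    simpa using (S'.orderIsoOfFin hS'card).injective this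
  let c : Fin k → Fin V := fun a => t (r a)
  have hcinj : Function.Injective c := fun a b hab =>
    hrinj (ht (hrS a) (hrS b) hab)
  -- V is positive
  have hV : 0 < V := by
    by_contra hV
    have hC : r ⟨0, hkpos⟩ ∈ S := hrS _
    have := hProw (r ⟨0, hkpos⟩)
    rw [Finset.sum_eq_zero (fun j _ => absurd j.2 (by omega))] at this
    · norm_num at this
  have hkV : k < V := by
    have : k ≤ V - 1 := min_le_right _ _
    omega
  -- the submatrix
  set B : Matrix (Fin k) (Fin k) ℝ := (P - Ntil).submatrix r c with hB
  -- diagonal and off-diagonal values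
  have hBdiag : ∀ a, B a a = P (r a) (c a) - 1 := by
    intro a
    simp [hB, Matrix.submatrix_apply, hone (r a) (hrS a), c]
  have hBoff : ∀ a b, a ≠ b → B a b = P (r a) (c b) := by
    intro a b hab
    have hcb : c b ≠ t (r a) := fun h => hab (hcinj (show c a = c b by simp [c, h.symm]).symm).symm
    simp [hB, Matrix.submatrix_apply, hzero (r a) (hrS a) (c b) hcb]
  -- strict diagonal dominance
  have hdom : ∀ a, ∑ b ∈ Finset.univ.erase a, ‖B a b‖ < ‖B a a‖ := by
    intro a
    -- a column outside the image of c
    obtain ⟨j0, hj0⟩ : ∃ j0 : Fin V, j0 ∉ Finset.univ.image c := by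
      by_contra h
      push_neg at h
      have hsub : (Finset.univ : Finset (Fin V)) ⊆ Finset.univ.image c := fun j _ => h j
      have hcard := Finset.card_le_card hsub
      simp only [Finset.card_image_of_injective _ hcinj, Finset.card_univ,
        Fintype.card_fin] at hcard
      omega
    have hsumlt : ∑ b, P (r a) (c b) < 1 := by
      have h1 : ∑ b, P (r a) (c b) = ∑ j ∈ Finset.univ.image c, P (r a) j :=
        (Finset.sum_image (fun x _ y _ h => hcinj h)).symm
      have h2 : ∑ j ∈ Finset.univ.image c, P (r a) j ≤
          ∑ j ∈ Finset.univ.erase j0, P (r a) j := by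
        apply Finset.sum_le_sum_of_subset_of_nonneg
        · intro j hj
          exact Finset.mem_erase.mpr ⟨fun h => hj0 (h ▸ hj), Finset.mem_univ j⟩
        · intro j _ _; exact (hP (r a) j).1.le
      have h3 : ∑ j ∈ Finset.univ.erase j0, P (r a) j = 1 - P (r a) j0 := by
        have := Finset.add_sum_erase Finset.univ (fun j => P (r a) j) (Finset.mem_univ j0)
        rw [hProw (r a)] at this
        linarith
      have := (hP (r a) j0).1
      linarith [h1, h2, h3]
    have hdval : ‖B a a‖ = 1 - P (r a) (c a) := by
      rw [hBdiag a, Real.norm_eq_abs, abs_of_neg (by linarith [(hP (r a) (c a)).2])]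
      ring
    have hoffsum : ∑ b ∈ Finset.univ.erase a, ‖B a b‖ =
        ∑ b ∈ Finset.univ.erase a, P (r a) (c b) := by
      apply Finset.sum_congr rfl
      intro b hb
      have hba : a ≠ b := fun h => (Finset.mem_erase.mp hb).1 h.symm
      rw [hBoff a b hba, Real.norm_eq_abs, abs_of_pos (hP (r a) (c b)).1]
    rw [hdval, hoffsum]
    have := Finset.add_sum_erase Finset.univ (fun b => P (r a) (c b)) (Finset.mem_univ a)
    linarith
  -- B is invertible
  have hdet : B.det ≠ 0 := det_ne_zero_of_sum_row_lt_diag hdom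
  have hBunit : IsUnit B := (Matrix.isUnit_iff_isUnit_det B).mpr hdet.isUnit
  have hBrows : LinearIndependent ℝ (fun a => B a) :=
    Matrix.linearIndependent_rows_iff_isUnit.mpr hBunit
  -- rows r of P - Ntil are linearly independent
  let π : (Fin V → ℝ) →ₗ[ℝ] (Fin k → ℝ) := LinearMap.funLeft ℝ ℝ c
  have hcomp : (fun a => B a) = π ∘ (fun a => (P - Ntil) (r a)) := rfl
  have hv : LinearIndependent ℝ (fun a => (P - Ntil) (r a)) :=
    LinearIndependent.of_comp π (by rw [← hcomp]; exact hBrows)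
  -- conclude
  rw [Matrix.rank_eq_finrank_span_row]
  have h1 : Fintype.card (Fin k) = Set.finrank ℝ (Set.range fun a => (P - Ntil) (r a)) :=
    linearIndependent_iff_card_eq_finrank_span.mp hv
  have h2 : Submodule.span ℝ (Set.range fun a => (P - Ntil) (r a)) ≤
      Submodule.span ℝ (Set.range (P - Ntil)) := by
    apply Submodule.span_mono
    rintro _ ⟨a, rfl⟩
    exact ⟨r a, rfl⟩
  have h3 := Submodule.finrank_mono h2
  calc k = Fintype.card (Fin k) := (Fintype.card_fin k).symm
    _ = Set.finrank ℝ (Set.range fun a => (P - Ntil) (r a)) := h1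
    _ ≤ _ := h3
end

section
/- Eckart–Young–Mirsky lower bound: let A ∈ ℝ^{m×n} with singular values ς_1 ≥ ς_2 ≥ ... ≥ ς_{min(m,n)}, and let B ∈ ℝ^{m×n} with rank(B) ≤ r < rank(A). Then ‖B − A‖_F ≥ sqrt(Σ_{i=r+1}^{min(m,n)} ς_i²) > 0. -/
/-!
Since `A v_k = ς_k u_k` and `B v_k` lies in the column space `S` of `B`, Bessel's inequality
applied to the rows of `B - A` gives `‖B - A‖_F² ≥ ∑ₖ ‖B v_k - ς_k u_k‖² ≥ ∑ₖ ς_k² (1 - q_k)`,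
where `q_k = ‖P_S u_k‖² ∈ [0, 1]` and `∑ₖ q_k ≤ dim S ≤ r`. As `ς_k²` decreases, the worst
weights put `q_k = 1` on the first `r` indices, leaving the tail `∑_{k ≥ r} ς_k²`. The tail is
positive since otherwise `A = U diag(ς) Vᵀ` would have rank at most `r`.
-/

open Matrix

/-- Frobenius norm of a real matrix. -/
noncomputable def frobNorm {m n : ℕ} (A : Matrix (Fin m) (Fin n) ℝ) : ℝ :=
  Real.sqrt (∑ i, ∑ j, (A i j) ^ 2)

open Finset Module RealInnerProductSpace

theorem sum_filter_le_sum_mul_one_sub {K r : ℕ} (hrK : r < K) {f q : Fin K → ℝ}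
    (hf0 : ∀ k, 0 ≤ f k) (hf : Antitone f) (hq0 : ∀ k, 0 ≤ q k) (hq1 : ∀ k, q k ≤ 1)
    (hq : ∑ k, q k ≤ r) :
    ∑ k ∈ univ.filter (fun k : Fin K => r ≤ k.val), f k ≤ ∑ k, f k * (1 - q k) := by
  set c := f ⟨r, hrK⟩
  -- Pointwise, the tail indicator is dominated by `1 - q` plus `c` times `q - 1_{k < r}`,
  -- and the correction sums to `c * (∑ q - r) ≤ 0`.
  have hpoint : ∀ k : Fin K, (if r ≤ k.val then f k else 0)
      ≤ f k * (1 - q k) + c * (q k - if k.val < r then 1 else 0) := by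
    intro k
    rcases lt_or_ge k.val r with hk | hk
    · have : c ≤ f k := hf (Fin.mk_le_of_le_val hk.le)
      simp only [hk, if_true, not_le.mpr hk, if_false]
      nlinarith [hq1 k]
    · have : f k ≤ c := hf (Fin.le_def.mpr hk)
      simp only [hk, if_true, not_lt.mpr hk, if_false]
      nlinarith [hq0 k]
  have hcount : ∑ k : Fin K, (if k.val < r then (1 : ℝ) else 0) = r := by
    rw [sum_boole, Fin.card_filter_val_lt, min_eq_right hrK.le]
  calc ∑ k ∈ univ.filter (fun k : Fin K => r ≤ k.val), f k
      = ∑ k : Fin K, if r ≤ k.val then f k else 0 := sum_filter _ _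
    _ ≤ ∑ k, f k * (1 - q k) + c * (∑ k, q k - r) := by
      rw [← hcount, ← sum_sub_distrib, mul_sum, ← sum_add_distrib]
      exact sum_le_sum fun k _ => hpoint k
    _ ≤ ∑ k, f k * (1 - q k) := by
      linarith [mul_nonpos_of_nonneg_of_nonpos (hf0 ⟨r, hrK⟩) (sub_nonpos.2 hq)]

section InnerProductSpace

variable {E : Type*} [NormedAddCommGroup E] [InnerProductSpace ℝ E]

theorem Submodule.norm_sub_starProjection_le (S : Submodule ℝ E) [S.HasOrthogonalProjection]
    (x : E) {w : E} (hw : w ∈ S) : ‖x - S.starProjection x‖ ≤ ‖x - w‖ := by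
  rw [Submodule.starProjection_minimal]
  exact ciInf_le ⟨0, by rintro _ ⟨c, rfl⟩; exact norm_nonneg _⟩ (⟨w, hw⟩ : S)

theorem Submodule.norm_sub_starProjection_sq (S : Submodule ℝ E) [S.HasOrthogonalProjection]
    (x : E) : ‖x - S.starProjection x‖ ^ 2 = ‖x‖ ^ 2 - ‖S.starProjection x‖ ^ 2 := by
  rw [S.norm_sq_eq_add_norm_sq_starProjection x, Submodule.starProjection_orthogonal_val]
  ring

theorem Orthonormal.sum_norm_starProjection_sq_le_finrank {ι : Type*} [Fintype ι] {u : ι → E}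
    (hu : Orthonormal ℝ u) (S : Submodule ℝ E) [FiniteDimensional ℝ S] :
    ∑ k, ‖S.starProjection (u k)‖ ^ 2 ≤ finrank ℝ S := by
  let b := stdOrthonormalBasis ℝ S
  have hparseval : ∀ x : E, ‖S.starProjection x‖ ^ 2 = ∑ j, ⟪(b j : E), x⟫ ^ 2 := by
    intro x
    rw [Submodule.starProjection_apply, Submodule.norm_coe, ← b.sum_sq_inner_right]
    simp only [Submodule.inner_orthogonalProjectionOnto_eq_of_mem_left]
  have hbessel : ∀ j, ∑ k, ⟪u k, (b j : E)⟫ ^ 2 ≤ 1 := by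
    intro j
    simpa [Real.norm_eq_abs, sq_abs, Submodule.norm_coe, b.orthonormal.1 j] using
      hu.sum_inner_products_le (s := univ) (x := (b j : E))
  calc ∑ k, ‖S.starProjection (u k)‖ ^ 2 = ∑ j, ∑ k, ⟪u k, (b j : E)⟫ ^ 2 := by
        simp only [hparseval, real_inner_comm (u _)]
        exact sum_comm
    _ ≤ ∑ _j : Fin (finrank ℝ S), (1 : ℝ) := sum_le_sum fun j _ => hbessel j
    _ = finrank ℝ S := by simp

theorem sum_filter_sq_le_sum_norm_sub_sq {K r : ℕ} (hrK : r < K) (S : Submodule ℝ E)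
    [FiniteDimensional ℝ S] (hS : finrank ℝ S ≤ r) {u : Fin K → E} (hu : Orthonormal ℝ u)
    {ς : Fin K → ℝ} (hς0 : ∀ k, 0 ≤ ς k) (hς : Antitone ς) {w : Fin K → E}
    (hw : ∀ k, w k ∈ S) :
    ∑ k ∈ univ.filter (fun k : Fin K => r ≤ k.val), ς k ^ 2 ≤ ∑ k, ‖w k - ς k • u k‖ ^ 2 := by
  set q : Fin K → ℝ := fun k => ‖S.starProjection (u k)‖ ^ 2
  have hq1 : ∀ k, q k ≤ 1 := fun k => by
    simpa [q, hu.1 k] using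
      pow_le_pow_left₀ (norm_nonneg _) (S.norm_starProjection_apply_le (u k)) 2
  have hdist : ∀ k, ς k ^ 2 * (1 - q k) ≤ ‖w k - ς k • u k‖ ^ 2 := fun k => by
    calc ς k ^ 2 * (1 - q k) = ‖ς k • u k - S.starProjection (ς k • u k)‖ ^ 2 := by
          rw [S.norm_sub_starProjection_sq, map_smul, norm_smul, norm_smul, hu.1 k,
            Real.norm_eq_abs, mul_pow, mul_pow, sq_abs]
          ring
      _ ≤ ‖w k - ς k • u k‖ ^ 2 := by
          rw [norm_sub_rev (w k)]
          gcongr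
          exact S.norm_sub_starProjection_le _ (hw k)
  calc ∑ k ∈ univ.filter (fun k : Fin K => r ≤ k.val), ς k ^ 2
      ≤ ∑ k, ς k ^ 2 * (1 - q k) :=
        sum_filter_le_sum_mul_one_sub hrK (fun k => sq_nonneg _)
          (fun _ b hab => pow_le_pow_left₀ (hς0 b) (hς hab) 2) (fun k => sq_nonneg _) hq1
          ((hu.sum_norm_starProjection_sq_le_finrank S).trans (by exact_mod_cast hS))
    _ ≤ ∑ k, ‖w k - ς k • u k‖ ^ 2 := sum_le_sum fun k _ => hdist k

end InnerProductSpace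

theorem orthonormal_toLp_of_dotProduct {ι n : Type*} [Fintype n] [DecidableEq ι]
    {v : ι → n → ℝ} (hv : ∀ k l, v k ⬝ᵥ v l = if k = l then (1 : ℝ) else 0) :
    Orthonormal ℝ fun k => (WithLp.toLp 2 (v k) : EuclideanSpace ℝ n) := by
  rw [orthonormal_iff_ite]
  intro k l
  rw [EuclideanSpace.inner_toLp_toLp, star_trivial, dotProduct_comm, hv]

theorem sum_norm_toLp_mulVec_sq_le {ι m n : Type*} [Fintype ι] [Fintype m] [Fintype n]
    (M : Matrix m n ℝ) {v : ι → n → ℝ}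
    (hv : Orthonormal ℝ fun k => (WithLp.toLp 2 (v k) : EuclideanSpace ℝ n)) :
    ∑ k, ‖(WithLp.toLp 2 (M *ᵥ v k) : EuclideanSpace ℝ m)‖ ^ 2 ≤ ∑ i, ∑ j, M i j ^ 2 := by
  simp only [EuclideanSpace.real_norm_sq_eq]
  rw [sum_comm]
  refine sum_le_sum fun i _ => ?_
  simpa [EuclideanSpace.inner_toLp_toLp, EuclideanSpace.real_norm_sq_eq, mulVec,
    dotProduct_comm, Real.norm_eq_abs, sq_abs] using
    hv.sum_inner_products_le (s := univ) (x := (WithLp.toLp 2 (M i) : EuclideanSpace ℝ n))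

section RankOneSum

variable {ι m n : Type*} [Fintype ι] {A : Matrix m n ℝ} {ς : ι → ℝ} {u : ι → m → ℝ}
  {v : ι → n → ℝ}

theorem mulVec_eq_smul_of_eq_sum [Fintype n] [DecidableEq ι]
    (hv : ∀ k l, v k ⬝ᵥ v l = if k = l then (1 : ℝ) else 0)
    (hA : ∀ i j, A i j = ∑ k, ς k * u k i * v k j) (l : ι) : A *ᵥ v l = ς l • u l := by
  ext i
  have hcol : ∀ k, ∑ j, ς k * u k i * v k j * v l j = ς k * u k i * (v k ⬝ᵥ v l) := fun k => by
    rw [dotProduct, mul_sum]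
    simp only [mul_assoc]
  simp only [mulVec, dotProduct, hA, sum_mul]
  rw [sum_comm]
  simp [hcol, hv]

theorem eq_mul_diagonal_mul_transpose_of_eq_sum [DecidableEq ι]
    (hA : ∀ i j, A i j = ∑ k, ς k * u k i * v k j) :
    A = of (fun i k => u k i) * diagonal ς * (of fun j k => v k j)ᵀ := by
  ext i j
  simp [hA, mul_apply, diagonal, mul_comm]

theorem rank_le_card_ne_zero_of_eq_sum [Fintype n]
    (hA : ∀ i j, A i j = ∑ k, ς k * u k i * v k j) : A.rank ≤ #{k | ς k ≠ 0} := by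
  classical
  rw [eq_mul_diagonal_mul_transpose_of_eq_sum hA]
  calc _ ≤ (of (fun i k => u k i) * diagonal ς).rank := rank_mul_le_left _ _
    _ ≤ (diagonal ς).rank := rank_mul_le_right _ _
    _ = #{k | ς k ≠ 0} := by rw [rank_diagonal, Fintype.card_subtype]

end RankOneSum

theorem sum_filter_sq_pos_of_lt_rank {m n : Type*} [Fintype n] {K r : ℕ} {A : Matrix m n ℝ}
    {ς : Fin K → ℝ} {u : Fin K → m → ℝ} {v : Fin K → n → ℝ}
    (hA : ∀ i j, A i j = ∑ k, ς k * u k i * v k j) (hr : r < A.rank) :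
    0 < ∑ k ∈ univ.filter (fun k : Fin K => r ≤ k.val), ς k ^ 2 := by
  by_contra! hle
  have hzero := (sum_eq_zero_iff_of_nonneg fun k _ => sq_nonneg (ς k)).1
    (hle.antisymm (sum_nonneg fun k _ => sq_nonneg _))
  have hsupp : ({k | ς k ≠ 0} : Finset (Fin K)) ⊆ ({k | k.val < r} : Finset (Fin K)) := by
    intro k hk
    simp only [mem_filter, mem_univ, true_and] at hk ⊢
    by_contra hkr
    exact hk (pow_eq_zero_iff two_ne_zero |>.1 (hzero k (by simpa using hkr)))
  have hcard : #{k : Fin K | k.val < r} ≤ r := Fin.card_filter_val_lt.trans_le (min_le_right _ _)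
  have := (rank_le_card_ne_zero_of_eq_sum hA).trans ((card_le_card hsupp).trans hcard)
  omega

theorem eckart_young_mirsky (m n : ℕ) (A : Matrix (Fin m) (Fin n) ℝ)
    (ς : Fin (min m n) → ℝ)
    (u : Fin (min m n) → Fin m → ℝ) (v : Fin (min m n) → Fin n → ℝ)
    (hu : ∀ k l, dotProduct (u k) (u l) = if k = l then (1 : ℝ) else 0)
    (hv : ∀ k l, dotProduct (v k) (v l) = if k = l then (1 : ℝ) else 0)
    (hς0 : ∀ k, 0 ≤ ς k) (hanti : Antitone ς)
    (hsvd : ∀ i j, A i j = ∑ k, ς k * u k i * v k j)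
    (r : ℕ) (B : Matrix (Fin m) (Fin n) ℝ)
    (hB : B.rank ≤ r) (hr : r < A.rank) :
    Real.sqrt (∑ i ∈ Finset.univ.filter (fun i : Fin (min m n) => r ≤ i.val), ς i ^ 2)
      ≤ frobNorm (B - A)
    ∧ 0 < Real.sqrt (∑ i ∈ Finset.univ.filter (fun i : Fin (min m n) => r ≤ i.val), ς i ^ 2) := by
  have hrK : r < min m n := hr.trans_le (le_min A.rank_le_height A.rank_le_width)
  let S := (LinearMap.range B.mulVecLin).map
    ((WithLp.linearEquiv 2 ℝ (Fin m → ℝ)).symm : (Fin m → ℝ) →ₗ[ℝ] EuclideanSpace ℝ (Fin m))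
  have hS : finrank ℝ S ≤ r := (LinearEquiv.finrank_map_eq _ _).trans_le hB
  have hres : ∀ k, WithLp.toLp 2 (B *ᵥ v k) - ς k • WithLp.toLp 2 (u k)
      = (WithLp.toLp 2 ((B - A) *ᵥ v k) : EuclideanSpace ℝ (Fin m)) := fun k => by
    rw [sub_mulVec, mulVec_eq_smul_of_eq_sum hv hsvd, WithLp.toLp_sub, WithLp.toLp_smul]
  refine ⟨Real.sqrt_le_sqrt ?_, Real.sqrt_pos.2 (sum_filter_sq_pos_of_lt_rank hsvd hr)⟩
  calc _ ≤ ∑ k, ‖WithLp.toLp 2 (B *ᵥ v k) - ς k • WithLp.toLp 2 (u k)‖ ^ 2 :=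
        sum_filter_sq_le_sum_norm_sub_sq hrK S hS (orthonormal_toLp_of_dotProduct hu) hς0 hanti
          fun k => ⟨B *ᵥ v k, ⟨v k, rfl⟩, rfl⟩
    _ ≤ ∑ i, ∑ j, (B - A) i j ^ 2 := by
        simpa only [hres] using
          sum_norm_toLp_mulVec_sq_le (B - A) (orthonormal_toLp_of_dotProduct hv)
end
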